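/- For every μ > 0, f(μ, q(μ)) < m(μ), where q(μ) ∈ (0,1) is defined by 1/(1−q(μ)) = 1 + e^{1+γ}·μ + (2−e^{1+γ})·μ²/(1+μ). -/

import Mathlib

/-- `f(μ,q) = −μ·log q + log(1 + (1/√(2e))·(1/√(1−q) − 1))`. -/
noncomputable def fbound (μ q : ℝ) : ℝ :=
  -μ * Real.log q +
    Real.log (1 + (1 / Real.sqrt (2 * Real.exp 1)) * (1 / Real.sqrt (1 - q) - 1))

/-- The Martinez bound
`m(μ) = (μ+1/2)·log(μ+1/2) − μ·log μ − 1/2 + log(1 + (√(2e)−1)/√(1+2μ))`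
(note `Real.log 0 = 0`, realizing the convention `0·log 0 = 0`). -/
noncomputable def mbound (μ : ℝ) : ℝ :=
  (μ + 1 / 2) * Real.log (μ + 1 / 2) - μ * Real.log μ - 1 / 2 +
    Real.log (1 + (Real.sqrt (2 * Real.exp 1) - 1) / Real.sqrt (1 + 2 * μ))

/-- The explicit choice `q(μ)`, defined by
`1/(1−q(μ)) = 1 + e^{1+γ}·μ + (2−e^{1+γ})·μ²/(1+μ)`. -/
noncomputable def qchoice (μ : ℝ) : ℝ :=
  1 - 1 / (1 + Real.exp (1 + Real.eulerMascheroniConstant) * μ +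
    (2 - Real.exp (1 + Real.eulerMascheroniConstant)) * μ ^ 2 / (1 + μ))

/-!
Put `D = 1/(1-q)`, `s = 1 + 2μ` and `T = √(2e)`. Then
`f(μ, 1 - 1/D) = μ (log D - log (D - 1)) + log (T - 1 + √D) - log T`, and at `D = s` this is
exactly `m(μ)`. The choice `q(μ)` is `D = s + δ` with `δ = (e^{1+γ} - 2) μ / (1 + μ) > 0`.
Moving from `s` to `s + δ`, the first term drops by at least `2μδ / (4μs + δ(4μ+1))`
(from `log (x/y) ≥ 2(x-y)/(x+y)`), while the second grows by at most `δ / (2√s (T - 1 + √s))`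
(from `log x ≤ x - 1` and concavity of `√`). The drop wins as soon as
`δ (4μ + 1) < 4μ √s (T - 1)`, and this holds for our `δ` because `e^γ < 2`.
-/

open Real

theorem two_mul_sub_div_add_le_log_sub_log {x y : ℝ} (hy : 0 < y) (hxy : y ≤ x) :
    2 * (x - y) / (x + y) ≤ log x - log y := by
  have ha : 0 ≤ (x - y) / y := div_nonneg (sub_nonneg.2 hxy) hy.le
  -- the first term of the series `log (1 + a) = 2 ∑ (a / (a + 2)) ^ (2k+1) / (2k+1)`
  have h := le_hasSum (hasSum_log_one_add ha) 0 fun k _ ↦ by positivity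
  rw [show 1 + (x - y) / y = x / y by field_simp; ring, log_div (by linarith) hy.ne'] at h
  refine le_of_eq_of_le ?_ h
  rw [div_add' _ _ _ hy.ne', div_div_div_cancel_right₀ hy.ne']
  ring_nf

theorem log_sub_log_sub_one_add_le {s D : ℝ} (hs : 1 < s) (hsD : s ≤ D) :
    log D - log (D - 1) + 2 * (D - s) / (2 * s * D - s - D) ≤ log s - log (s - 1) := by
  have h := two_mul_sub_div_add_le_log_sub_log (x := s * (D - 1)) (y := (s - 1) * D)
    (by nlinarith) (by nlinarith)
  rw [log_mul (by linarith) (by linarith), log_mul (by linarith) (by linarith),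
    show s * (D - 1) - (s - 1) * D = D - s by ring,
    show s * (D - 1) + (s - 1) * D = 2 * s * D - s - D by ring] at h
  linarith

theorem sqrt_add_le_sqrt_add_div {x h : ℝ} (hx : 0 < x) (hh : 0 ≤ h) :
    √(x + h) ≤ √x + h / (2 * √x) := by
  have hr : 0 < √x := sqrt_pos.2 hx
  rw [sqrt_le_left (by positivity)]
  have : (√x + h / (2 * √x)) ^ 2 = x + h + (h / (2 * √x)) ^ 2 := by
    field_simp
    rw [sq_sqrt hx.le]
    ring
  nlinarith [sq_nonneg (h / (2 * √x))]

theorem log_add_sqrt_sub_log_add_sqrt_le {b s D : ℝ} (hb : 0 ≤ b) (hs : 0 < s) (hsD : s ≤ D) :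
    log (b + √D) - log (b + √s) ≤ (D - s) / (2 * √s * (b + √s)) := by
  have ht : 0 < √s := sqrt_pos.2 hs
  have hy : 0 < b + √s := by positivity
  have hx : 0 < b + √D := by linarith [sqrt_le_sqrt hsD]
  have hD : √D ≤ √s + (D - s) / (2 * √s) := by
    simpa using sqrt_add_le_sqrt_add_div hs (sub_nonneg.2 hsD)
  calc log (b + √D) - log (b + √s) = log ((b + √D) / (b + √s)) :=
        (log_div hx.ne' hy.ne').symm
    _ ≤ (b + √D) / (b + √s) - 1 := log_le_sub_one_of_pos (div_pos hx hy)
    _ = (√D - √s) / (b + √s) := by field_simp; ring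
    _ ≤ (D - s) / (2 * √s) / (b + √s) := by gcongr; linarith
    _ = (D - s) / (2 * √s * (b + √s)) := by rw [div_div]

theorem one_lt_sqrt_two_mul_exp_one : 1 < √(2 * exp 1) := by
  rw [lt_sqrt zero_le_one]
  linarith [add_one_le_exp 1]

theorem sqrt_two_mul_exp_one_lt : √(2 * exp 1) < 2.344 := by
  rw [sqrt_lt' (by norm_num)]
  linarith [exp_one_lt_d9]

theorem two_lt_exp_one_add_eulerMascheroniConstant :
    2 < exp (1 + eulerMascheroniConstant) := by
  have : exp 1 < exp (1 + eulerMascheroniConstant) :=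
    exp_lt_exp.2 (by linarith [one_half_lt_eulerMascheroniConstant])
  linarith [exp_one_gt_d9]

theorem exp_one_add_eulerMascheroniConstant_lt :
    exp (1 + eulerMascheroniConstant) < 2 * exp 1 := by
  have hγ : eulerMascheroniConstant < log 2 := by
    linarith [eulerMascheroniConstant_lt_two_thirds, log_two_gt_d9]
  rw [exp_add, mul_comm]
  gcongr
  rwa [← exp_lt_exp, exp_log two_pos] at hγ

theorem fbound_one_sub_inv (μ : ℝ) {D : ℝ} (hD : 1 < D) :
    fbound μ (1 - D⁻¹) =
      μ * (log D - log (D - 1)) + log (√(2 * exp 1) - 1 + √D) - log √(2 * exp 1) := by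
  have hT := one_lt_sqrt_two_mul_exp_one
  have hq : 1 - D⁻¹ = (D - 1) / D := by field_simp
  have hsq : 1 / √(1 - (1 - D⁻¹)) = √D := by simp
  have hB : 1 + 1 / √(2 * exp 1) * (√D - 1) = (√(2 * exp 1) - 1 + √D) / √(2 * exp 1) := by
    field_simp
    ring
  rw [fbound, hsq, hB, hq, log_div (by linarith) (by linarith),
    log_div (by positivity) (by positivity)]
  ring

theorem mbound_eq_fbound {μ : ℝ} (hμ : 0 < μ) : mbound μ = fbound μ (1 - (1 + 2 * μ)⁻¹) := by
  have ht : 0 < √(1 + 2 * μ) := sqrt_pos.2 (by linarith)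
  have hT := one_lt_sqrt_two_mul_exp_one
  have hhalf : μ + 1 / 2 = (1 + 2 * μ) / 2 := by ring
  have hB : 1 + (√(2 * exp 1) - 1) / √(1 + 2 * μ) =
      (√(2 * exp 1) - 1 + √(1 + 2 * μ)) / √(1 + 2 * μ) := by
    field_simp
    ring
  rw [fbound_one_sub_inv μ (by linarith), mbound, hhalf, hB, add_sub_cancel_left,
    log_div (by linarith) two_ne_zero, log_div (by positivity) ht.ne', log_sqrt (by linarith),
    log_sqrt (by positivity), log_mul two_ne_zero (exp_pos 1).ne', log_exp,
    log_mul two_ne_zero hμ.ne']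
  ring

theorem fbound_perturbed_lt {μ δ : ℝ} (hμ : 0 < μ) (hδ : 0 < δ)
    (hsmall : δ * (4 * μ + 1) < 4 * μ * √(1 + 2 * μ) * (√(2 * exp 1) - 1)) :
    fbound μ (1 - (1 + 2 * μ + δ)⁻¹) < fbound μ (1 - (1 + 2 * μ)⁻¹) := by
  set s := 1 + 2 * μ
  set b := √(2 * exp 1) - 1
  have hb : 0 < b := sub_pos.2 one_lt_sqrt_two_mul_exp_one
  have ht : 0 < √s := sqrt_pos.2 (by linarith)
  have hdrop := log_sub_log_sub_one_add_le (s := s) (D := s + δ) (by linarith) (by linarith)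
  have hgrowth := log_add_sqrt_sub_log_add_sqrt_le hb.le (by linarith : 0 < s)
    (by linarith : s ≤ s + δ)
  have hwin : (s + δ - s) / (2 * √s * (b + √s)) <
      μ * (2 * (s + δ - s) / (2 * s * (s + δ) - s - (s + δ))) := by
    have hden : 2 * s * (s + δ) - s - (s + δ) = 4 * μ * s + δ * (4 * μ + 1) := by ring
    have hexpand : μ * (2 * δ) * (2 * √s * (b + √s)) =
        δ * (4 * μ * √s * b) + δ * (4 * μ * s) := by
      linear_combination (4 * μ * δ) * mul_self_sqrt (by linarith : 0 ≤ s)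
    rw [add_sub_cancel_left, hden, mul_div_assoc', div_lt_div_iff₀ (by positivity) (by positivity),
      hexpand]
    linarith [mul_lt_mul_of_pos_left hsmall hδ]
  rw [fbound_one_sub_inv μ (by linarith), fbound_one_sub_inv μ (by linarith)]
  linarith [mul_le_mul_of_nonneg_left hdrop hμ.le]

noncomputable def qshift (μ : ℝ) : ℝ := (exp (1 + eulerMascheroniConstant) - 2) * μ / (1 + μ)

theorem qchoice_eq {μ : ℝ} (hμ : 0 < μ) : qchoice μ = 1 - (1 + 2 * μ + qshift μ)⁻¹ := by
  rw [qchoice, qshift, one_div]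
  congr 2
  field_simp
  ring

theorem qshift_pos {μ : ℝ} (hμ : 0 < μ) : 0 < qshift μ :=
  div_pos (mul_pos (sub_pos.2 two_lt_exp_one_add_eulerMascheroniConstant) hμ) (by linarith)

theorem qshift_mul_lt {μ : ℝ} (hμ : 0 < μ) :
    qshift μ * (4 * μ + 1) < 4 * μ * √(1 + 2 * μ) * (√(2 * exp 1) - 1) := by
  set T := √(2 * exp 1)
  set t := √(1 + 2 * μ)
  have hT1 := one_lt_sqrt_two_mul_exp_one
  have hT2 := sqrt_two_mul_exp_one_lt
  have hTsq : T ^ 2 = 2 * exp 1 := sq_sqrt (by positivity)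
  have htsq : t ^ 2 = 1 + 2 * μ := sq_sqrt (by linarith)
  have ht : 0 ≤ t := sqrt_nonneg _
  have ha := exp_one_add_eulerMascheroniConstant_lt
  -- `(2e - 2) / (√(2e) - 1) ≈ 2.58`, and
  -- `2t³ - 5.2t² + 2t + 2.6 = (2t + 1)(t - 1.55)² + 0.295t + 0.1975`
  have hK : T ^ 2 - 2 < 2.6 * (T - 1) := by nlinarith
  have hcubic : 2.6 * (2 * t ^ 2 - 1) ≤ 2 * t * (t ^ 2 + 1) := by
    nlinarith [mul_nonneg (by linarith : (0:ℝ) ≤ 2 * t + 1) (sq_nonneg (t - 1.55))]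
  have hcoef : (exp (1 + eulerMascheroniConstant) - 2) * (4 * μ + 1) <
      (T - 1) * (4 * t * (1 + μ)) :=
    calc (exp (1 + eulerMascheroniConstant) - 2) * (4 * μ + 1)
        < 2.6 * (T - 1) * (4 * μ + 1) := mul_lt_mul_of_pos_right (by linarith) (by linarith)
      _ = (T - 1) * (2.6 * (2 * t ^ 2 - 1)) := by rw [htsq]; ring
      _ ≤ (T - 1) * (2 * t * (t ^ 2 + 1)) := by gcongr
      _ = (T - 1) * (4 * t * (1 + μ)) := by rw [htsq]; ring
  rw [qshift, div_mul_eq_mul_div, div_lt_iff₀ (by linarith)]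
  linarith [mul_lt_mul_of_pos_left hcoef hμ]

/-- For every `μ > 0`, `q(μ) ∈ (0,1)` and `f(μ, q(μ)) < m(μ)`. -/
theorem stmt10 (μ : ℝ) (hμ : 0 < μ) :
    qchoice μ ∈ Set.Ioo (0 : ℝ) 1 ∧ fbound μ (qchoice μ) < mbound μ := by
  have hD : 1 < 1 + 2 * μ + qshift μ := by linarith [qshift_pos hμ]
  rw [qchoice_eq hμ, mbound_eq_fbound hμ]
  exact ⟨⟨sub_pos.2 (inv_lt_one_of_one_lt₀ hD), sub_lt_self _ (by positivity)⟩,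
    fbound_perturbed_lt hμ (qshift_pos hμ) (qshift_mul_lt hμ)⟩
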